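/- Let S be a polynomial CPDS over ℝ^d and κ ∈ ℝ[x_1,…,x_d]. Suppose that for each j in a finite index set J there are p_j ∈ ℝ[x_1,…,x_d] and w_j ∈ ℝ admitting sum-of-squares certificates as in the single-template SOS conditions (identities (1), (2), (3) of the SOS hierarchy) for S and κ. Then the reachable set R(S) is contained in the intersection V := ⋂_{j∈J} {x ∈ ℝ^d | p_j(x) ≤ w_j}, and every x ∈ V satisfies κ(x) ≤ min_{j∈J} w_j; in particular, if J is nonempty, {p_j | j ∈ J} is a well-representative template basis certifying the sublevel property of κ. -/

import Mathlib

/-!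
Evaluating a certificate identity at a point turns every sum of squares into a nonnegative
number. Identity (1) then gives `p ≤ w` on `Xin`, identity (2) gives `p ∘ Tᵢ ≤ p` on
`Xᵢ ∩ X0`, so `{p ≤ w}` is an inductive invariant and contains the reachable set, and
identity (3) gives `κ ≤ p` everywhere.
-/

open MvPolynomial

section

variable {d : ℕ} {ι : Type*}

def Reach (Xin X0 : Set (Fin d → ℝ)) (X : ι → Set (Fin d → ℝ))
    (T : ι → (Fin d → ℝ) → (Fin d → ℝ)) : Set (Fin d → ℝ) :=
  ⋂₀ {C | Xin ⊆ C ∧ ∀ i : ι, T i '' (C ∩ X i ∩ X0) ⊆ C}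

/-- The single-template SOS conditions (identities (1), (2), (3) of the SOS hierarchy)
for a template polynomial `p` with bound `w`, w.r.t. the polynomial CPDS described by
the tests `rin, r0, ri`, the polynomial updates `Tp`, and the property polynomial `κ`. -/
def SOSCert (nin n0 : ℕ) (ni : ι → ℕ)
    (rin : Fin nin → MvPolynomial (Fin d) ℝ)
    (r0 : Fin n0 → MvPolynomial (Fin d) ℝ)
    (ri : (i : ι) → Fin (ni i) → MvPolynomial (Fin d) ℝ)
    (Tp : ι → Fin d → MvPolynomial (Fin d) ℝ)
    (κ : MvPolynomial (Fin d) ℝ)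
    (p : MvPolynomial (Fin d) ℝ) (w : ℝ) : Prop :=
  ∃ (σ0 : MvPolynomial (Fin d) ℝ) (σ : Fin nin → MvPolynomial (Fin d) ℝ)
    (ψ : MvPolynomial (Fin d) ℝ) (σi : ι → MvPolynomial (Fin d) ℝ)
    (μ : (i : ι) → Fin (ni i) → MvPolynomial (Fin d) ℝ)
    (γ : ι → Fin n0 → MvPolynomial (Fin d) ℝ),
    IsSumSq σ0 ∧ (∀ j, IsSumSq (σ j)) ∧ IsSumSq ψ ∧ (∀ i, IsSumSq (σi i)) ∧
    (∀ i j, IsSumSq (μ i j)) ∧ (∀ i j, IsSumSq (γ i j)) ∧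
    (C w - p + ∑ j : Fin nin, σ j * rin j = σ0) ∧
    (∀ i : ι, -(bind₁ (Tp i) p) + p + (∑ j : Fin (ni i), μ i j * ri i j)
      + (∑ j : Fin n0, γ i j * r0 j) = σi i) ∧
    (-κ + p = ψ)

theorem IsSumSq.map {R S F : Type*} [NonUnitalNonAssocSemiring R]
    [NonUnitalNonAssocSemiring S] [FunLike F R S] [NonUnitalRingHomClass F R S]
    (f : F) {s : R} (hs : IsSumSq s) : IsSumSq (f s) := by
  induction hs with
  | zero => simp
  | sq_add a _ ih => simpa using IsSumSq.sq_add (f a) ih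

namespace MvPolynomial

theorem eval_bind₁ {σ τ R : Type*} [CommSemiring R] (x : τ → R) (f : σ → MvPolynomial τ R)
    (p : MvPolynomial σ R) : eval x (bind₁ f p) = eval (fun i => eval x (f i)) p :=
  aeval_bind₁ x f p

variable {σ R : Type*} [CommRing R] [LinearOrder R] [IsStrictOrderedRing R]

theorem eval_nonneg_of_isSumSq {p : MvPolynomial σ R} (hp : IsSumSq p) (x : σ → R) :
    0 ≤ eval x p :=
  (hp.map (eval x)).nonneg

theorem eval_sum_mul_nonpos {s : Finset ι} {m g : ι → MvPolynomial σ R}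
    (hm : ∀ j, IsSumSq (m j)) {x : σ → R} (hg : ∀ j, eval x (g j) ≤ 0) :
    eval x (∑ j ∈ s, m j * g j) ≤ 0 := by
  rw [map_sum]
  exact Finset.sum_nonpos fun j _ => by
    simpa only [map_mul] using mul_nonpos_of_nonneg_of_nonpos
      (eval_nonneg_of_isSumSq (hm j) x) (hg j)

end MvPolynomial

theorem reach_subset_of_inductive {Xin X0 C : Set (Fin d → ℝ)} {X : ι → Set (Fin d → ℝ)}
    {T : ι → (Fin d → ℝ) → (Fin d → ℝ)} (hin : Xin ⊆ C)
    (hstep : ∀ i, ∀ x ∈ C, x ∈ X i → x ∈ X0 → T i x ∈ C) : Reach Xin X0 X T ⊆ C :=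
  Set.sInter_subset_of_mem
    ⟨hin, by rintro i _ ⟨x, ⟨⟨hxC, hxi⟩, hx0⟩, rfl⟩; exact hstep i x hxC hxi hx0⟩

namespace SOSCert

variable {nin n0 : ℕ} {ni : ι → ℕ} {rin : Fin nin → MvPolynomial (Fin d) ℝ}
  {r0 : Fin n0 → MvPolynomial (Fin d) ℝ} {ri : (i : ι) → Fin (ni i) → MvPolynomial (Fin d) ℝ}
  {Tp : ι → Fin d → MvPolynomial (Fin d) ℝ} {κ p : MvPolynomial (Fin d) ℝ} {w : ℝ}

theorem eval_property_le (h : SOSCert nin n0 ni rin r0 ri Tp κ p w) (x : Fin d → ℝ) :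
    eval x κ ≤ eval x p := by
  obtain ⟨-, -, ψ, -, -, -, -, -, hψ, -, -, -, -, -, hκ⟩ := h
  have hψx := eval_nonneg_of_isSumSq hψ x
  rw [← hκ, map_add, map_neg] at hψx
  linarith

theorem eval_le_bound_of_init (h : SOSCert nin n0 ni rin r0 ri Tp κ p w) {x : Fin d → ℝ}
    (hx : ∀ j, eval x (rin j) ≤ 0) : eval x p ≤ w := by
  obtain ⟨σ0, σ, -, -, -, -, hσ0, hσ, -, -, -, -, hinit, -, -⟩ := h
  have hσ0x := eval_nonneg_of_isSumSq hσ0 x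
  have hsum := eval_sum_mul_nonpos (s := Finset.univ) hσ hx
  rw [← hinit, map_add, map_sub, eval_C] at hσ0x
  linarith

theorem eval_comp_le (h : SOSCert nin n0 ni rin r0 ri Tp κ p w) (i : ι) {x : Fin d → ℝ}
    (hxi : ∀ j, eval x (ri i j) ≤ 0) (hx0 : ∀ j, eval x (r0 j) ≤ 0) :
    eval (fun l => eval x (Tp i l)) p ≤ eval x p := by
  obtain ⟨-, -, -, σi, μ, γ, -, -, -, hσi, hμ, hγ, -, hstep, -⟩ := h
  have hσix := eval_nonneg_of_isSumSq (hσi i) x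
  have hμx := eval_sum_mul_nonpos (s := Finset.univ) (hμ i) hxi
  have hγx := eval_sum_mul_nonpos (s := Finset.univ) (hγ i) hx0
  rw [← hstep i, map_add, map_add, map_add, map_neg, eval_bind₁] at hσix
  linarith

theorem reach_subset {Xin X0 : Set (Fin d → ℝ)} {X : ι → Set (Fin d → ℝ)}
    (h : SOSCert nin n0 ni rin r0 ri Tp κ p w)
    (hXin : Xin ⊆ {x | ∀ j : Fin nin, eval x (rin j) ≤ 0})
    (hX0 : X0 ⊆ {x | ∀ j : Fin n0, eval x (r0 j) ≤ 0})
    (hXi : ∀ i : ι, X i ⊆ {x | ∀ j : Fin (ni i), eval x (ri i j) ≤ 0}) :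
    Reach Xin X0 X (fun i x => fun l : Fin d => eval x (Tp i l)) ⊆ {x | eval x p ≤ w} :=
  reach_subset_of_inductive (fun _ hx => h.eval_le_bound_of_init (hXin hx))
    fun i _ hxp hxi hx0 => (h.eval_comp_le i (hXi i hxi) (hX0 hx0)).trans hxp

end SOSCert

theorem sos_family_invariant_general (d : ℕ) (ι : Type*)
    (J : Type*) [Fintype J]
    (nin n0 : ℕ) (ni : ι → ℕ)
    (rin : Fin nin → MvPolynomial (Fin d) ℝ)
    (r0 : Fin n0 → MvPolynomial (Fin d) ℝ)
    (ri : (i : ι) → Fin (ni i) → MvPolynomial (Fin d) ℝ)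
    (Tp : ι → Fin d → MvPolynomial (Fin d) ℝ)
    (Xin X0 : Set (Fin d → ℝ)) (X : ι → Set (Fin d → ℝ))
    (hXin : Xin ⊆ {x | ∀ j : Fin nin, eval x (rin j) ≤ 0})
    (hX0 : X0 ⊆ {x | ∀ j : Fin n0, eval x (r0 j) ≤ 0})
    (hXi : ∀ i : ι, X i ⊆ {x | ∀ j : Fin (ni i), eval x (ri i j) ≤ 0})
    (κ : MvPolynomial (Fin d) ℝ)
    (p : J → MvPolynomial (Fin d) ℝ) (w : J → ℝ)
    (hcert : ∀ j : J, SOSCert nin n0 ni rin r0 ri Tp κ (p j) (w j)) :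
    Reach Xin X0 X (fun i x => fun l : Fin d => eval x (Tp i l)) ⊆
      (⋂ j : J, {x : Fin d → ℝ | eval x (p j) ≤ w j}) ∧
    (∀ x ∈ ⋂ j : J, {x : Fin d → ℝ | eval x (p j) ≤ w j},
      ∀ j : J, eval x κ ≤ w j) ∧
    ∀ hJ : (Finset.univ : Finset J).Nonempty,
      ∀ x ∈ ⋂ j : J, {x : Fin d → ℝ | eval x (p j) ≤ w j},
        eval x κ ≤ Finset.univ.inf' hJ w := by
  have hκ : ∀ x ∈ ⋂ j : J, {x : Fin d → ℝ | eval x (p j) ≤ w j}, ∀ j, eval x κ ≤ w j :=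
    fun x hx j => ((hcert j).eval_property_le x).trans (Set.mem_iInter.mp hx j)
  exact ⟨Set.subset_iInter fun j => (hcert j).reach_subset hXin hX0 hXi, hκ,
    fun hJ x hx => Finset.le_inf' hJ w fun j _ => hκ x hx j⟩

/-- If for every `j` in a finite index set `J` the pair `(pⱼ, wⱼ)` admits single-template
SOS certificates for the polynomial CPDS `S` and `κ`, then the reachable set of `S` is
contained in `V = ⋂ⱼ {x | pⱼ(x) ≤ wⱼ}`, and every `x ∈ V` satisfies `κ(x) ≤ wⱼ` for
each `j`; in particular, if `J` is nonempty, `κ(x) ≤ min_{j ∈ J} wⱼ` on `V`. -/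
theorem sos_family_invariant (d : ℕ) (ι : Type*) [Fintype ι]
    (J : Type*) [Fintype J]
    (nin n0 : ℕ) (ni : ι → ℕ)
    (rin : Fin nin → MvPolynomial (Fin d) ℝ)
    (r0 : Fin n0 → MvPolynomial (Fin d) ℝ)
    (ri : (i : ι) → Fin (ni i) → MvPolynomial (Fin d) ℝ)
    (Tp : ι → Fin d → MvPolynomial (Fin d) ℝ)
    (Xin X0 : Set (Fin d → ℝ)) (X : ι → Set (Fin d → ℝ))
    (hXin : Xin ⊆ {x | ∀ j : Fin nin, eval x (rin j) ≤ 0})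
    (hX0 : X0 ⊆ {x | ∀ j : Fin n0, eval x (r0 j) ≤ 0})
    (hXi : ∀ i : ι, X i ⊆ {x | ∀ j : Fin (ni i), eval x (ri i j) ≤ 0})
    (κ : MvPolynomial (Fin d) ℝ)
    (p : J → MvPolynomial (Fin d) ℝ) (w : J → ℝ)
    (hcert : ∀ j : J, SOSCert nin n0 ni rin r0 ri Tp κ (p j) (w j)) :
    Reach Xin X0 X (fun i x => fun l : Fin d => eval x (Tp i l)) ⊆
      (⋂ j : J, {x : Fin d → ℝ | eval x (p j) ≤ w j}) ∧
    (∀ x ∈ ⋂ j : J, {x : Fin d → ℝ | eval x (p j) ≤ w j},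
      ∀ j : J, eval x κ ≤ w j) ∧
    ∀ hJ : (Finset.univ : Finset J).Nonempty,
      ∀ x ∈ ⋂ j : J, {x : Fin d → ℝ | eval x (p j) ≤ w j},
        eval x κ ≤ Finset.univ.inf' hJ w :=
  sos_family_invariant_general d ι J nin n0 ni rin r0 ri Tp Xin X0 X hXin hX0 hXi κ p w hcert

end
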